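/- For every T > 0 and every c > 0, the integral ∫₀^∞ c^s μ(T, s, 0) ds is finite. -/

import Mathlib

/-!
Restricting the Gamma integral to `[x, x + 1]` gives `x ^ s ≤ e ^ (x + 1) Γ(s + 1)` for all
`x, s ≥ 0`. Applied to `(k u) ^ s` and to `(T e ^ (k + 1)) ^ u`, it bounds the integrand
`T ^ u u ^ s / (Γ(s + 1) Γ(u + 1))` of `μ(T, s, 0)` by `C k ^ (-s) e ^ (-u)` for any `k > 0`, so
`μ(T, s, 0) ≤ C k ^ (-s)`. Choosing `k = c e` bounds `c ^ s μ(T, s, 0)` by `C e ^ (-s)`, which is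
integrable on `(0, ∞)`.
-/

open MeasureTheory

/-- The Volterra `μ`-functions: `μ(t,β,δ) = ∫₀^∞ t^(δ+s) s^β / (Γ(β+1) Γ(δ+s+1)) ds`. -/
noncomputable def volterraMu (t β δ : ℝ) : ℝ :=
  ∫ s in Set.Ioi (0 : ℝ), t ^ (δ + s) * s ^ β / (Real.Gamma (β + 1) * Real.Gamma (δ + s + 1))

open Set Real

theorem Real.rpow_le_exp_mul_Gamma_add_one {x s : ℝ} (hx : 0 ≤ x) (hs : 0 ≤ s) :
    x ^ s ≤ exp (x + 1) * Gamma (s + 1) := by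
  have hsub : Ioc x (x + 1) ⊆ Ioi 0 := fun t ht => hx.trans_lt ht.1
  have hint : IntegrableOn (fun t => exp (-t) * t ^ s) (Ioi 0) := by
    simpa using GammaIntegral_convergent (s := s + 1) (by linarith)
  have hlower : exp (-(x + 1)) * x ^ s ≤ Gamma (s + 1) := calc
    exp (-(x + 1)) * x ^ s = ∫ _ in Ioc x (x + 1), exp (-(x + 1)) * x ^ s := by simp
    _ ≤ ∫ t in Ioc x (x + 1), exp (-t) * t ^ s := by
      refine setIntegral_mono_on (integrableOn_const (by simp) enorm_ne_top)
        (hint.mono_set hsub) measurableSet_Ioc fun t ht => ?_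
      gcongr
      · exact ht.2
      · exact ht.1.le
    _ ≤ ∫ t in Ioi 0, exp (-t) * t ^ s :=
      setIntegral_mono_set hint
        (ae_restrict_of_forall_mem measurableSet_Ioi fun t ht => by
          have : 0 < t := ht
          positivity)
        hsub.eventuallyLE
    _ = Gamma (s + 1) := by rw [Gamma_eq_integral (by linarith), add_sub_cancel_right]
  calc x ^ s = exp (x + 1) * (exp (-(x + 1)) * x ^ s) := by
        rw [← mul_assoc, ← exp_add, add_neg_cancel, exp_zero, one_mul]
    _ ≤ exp (x + 1) * Gamma (s + 1) := by gcongr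

theorem rpow_mul_rpow_div_Gamma_mul_Gamma_le {t k s u : ℝ} (ht : 0 ≤ t) (hk : 0 < k) (hs : 0 ≤ s)
    (hu : 0 ≤ u) :
    t ^ u * u ^ s / (Gamma (s + 1) * Gamma (u + 1)) ≤
      exp (t * exp (k + 1) + 2) * k ^ (-s) * exp (-u) := by
  have hk_s : u ^ s ≤ k ^ (-s) * (exp (k * u + 1) * Gamma (s + 1)) := by
    have := rpow_le_exp_mul_Gamma_add_one (mul_nonneg hk.le hu) hs
    rwa [mul_rpow hk.le hu, ← le_inv_mul_iff₀ (by positivity), ← rpow_neg hk.le] at this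
  have ht_u := rpow_le_exp_mul_Gamma_add_one (mul_nonneg ht (exp_pos (k + 1)).le) hu
  rw [div_le_iff₀ (by positivity)]
  calc t ^ u * u ^ s ≤ t ^ u * (k ^ (-s) * (exp (k * u + 1) * Gamma (s + 1))) := by gcongr
    _ = k ^ (-s) * Gamma (s + 1) * exp (1 - u) * (t * exp (k + 1)) ^ u := by
      rw [mul_rpow ht (exp_pos _).le, ← exp_mul, show k * u + 1 = (1 - u) + (k + 1) * u by ring,
        exp_add]
      ring
    _ ≤ k ^ (-s) * Gamma (s + 1) * exp (1 - u) * (exp (t * exp (k + 1) + 1) * Gamma (u + 1)) := by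
      gcongr
    _ = exp (t * exp (k + 1) + 2) * k ^ (-s) * exp (-u) * (Gamma (s + 1) * Gamma (u + 1)) := by
      have hexp :
          exp (1 - u) * exp (t * exp (k + 1) + 1) = exp (t * exp (k + 1) + 2) * exp (-u) := by
        rw [← exp_add, ← exp_add]
        ring_nf
      linear_combination k ^ (-s) * Gamma (s + 1) * Gamma (u + 1) * hexp

theorem volterraMu_zero_le {t k s : ℝ} (ht : 0 ≤ t) (hk : 0 < k) (hs : 0 ≤ s) :
    volterraMu t s 0 ≤ exp (t * exp (k + 1) + 2) * k ^ (-s) := calc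
  volterraMu t s 0 ≤ ∫ u in Ioi 0, exp (t * exp (k + 1) + 2) * k ^ (-s) * exp (-u) := by
    simp only [volterraMu, zero_add]
    refine integral_mono_of_nonneg
      (ae_restrict_of_forall_mem measurableSet_Ioi fun u hu => ?_)
      ((integrableOn_exp_neg_Ioi 0).const_mul _)
      (ae_restrict_of_forall_mem measurableSet_Ioi fun u hu =>
        rpow_mul_rpow_div_Gamma_mul_Gamma_le ht hk hs (le_of_lt hu))
    have : 0 < u := hu
    positivity
  _ = exp (t * exp (k + 1) + 2) * k ^ (-s) := by
    rw [integral_const_mul, integral_exp_neg_Ioi_zero, mul_one]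

theorem integral_rpow_mul_volterraMu_lt_top (T c : ℝ) (hT : 0 < T) (hc : 0 < c) :
    ∫⁻ s in Set.Ioi (0 : ℝ), ENNReal.ofReal (c ^ s * volterraMu T s 0) < ⊤ := by
  set C := exp (T * exp (c * exp 1 + 1) + 2)
  have hbound : ∀ s ∈ Ioi (0 : ℝ), c ^ s * volterraMu T s 0 ≤ C * exp (-s) := fun s hs => calc
    c ^ s * volterraMu T s 0 ≤ c ^ s * (C * (c * exp 1) ^ (-s)) := by
      gcongr
      exact volterraMu_zero_le hT.le (by positivity) (le_of_lt hs)
    _ = C * exp (-s) := by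
      have hcancel : c ^ s * c ^ (-s) = 1 := by rw [← rpow_add hc, add_neg_cancel, rpow_zero]
      rw [mul_rpow hc.le (exp_pos 1).le, exp_one_rpow]
      linear_combination C * exp (-s) * hcancel
  calc ∫⁻ s in Ioi 0, ENNReal.ofReal (c ^ s * volterraMu T s 0)
      ≤ ∫⁻ s in Ioi 0, ENNReal.ofReal (C * exp (-s)) :=
        setLIntegral_mono' measurableSet_Ioi fun s hs => ENNReal.ofReal_le_ofReal (hbound s hs)
    _ < ⊤ := ((integrableOn_exp_neg_Ioi 0).const_mul C).lintegral_lt_top
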